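/- Let n, m ∈ ℕ, let α > 0 and ν > 0 be real numbers, let W̄ be a symmetric positive definite n×n real matrix, let D be a symmetric n×n real matrix (representing the time derivative of W̄ along a trajectory), let A be an n×n real matrix, B an n×m real matrix, and R a symmetric positive definite m×m real matrix. Define W = ν⁻¹ W̄, M = W⁻¹, Ṁ = −M (ν⁻¹ D) M, and K = −R⁻¹ Bᵀ M. If −D + 2 sym(A W̄) − 2ν B R⁻¹ Bᵀ ⪯ −2α W̄ (Loewner order), then Ṁ + 2 sym(M A + M B K) ⪯ −2α M. Consequently the feedback gain K = −R⁻¹ Bᵀ M is a feasible point of the contraction constraint Ṁ + 2 sym(MA + MBK) ⪯ −2αM, so this constraint is always feasible whenever the CV-STEM matrix inequality for W̄ holds. -/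

import Mathlib

open Matrix

/-- `sym X = (X + Xᵀ)/2`. -/
noncomputable def matSym {n : ℕ} (X : Matrix (Fin n) (Fin n) ℝ) :
    Matrix (Fin n) (Fin n) ℝ := (1 / 2 : ℝ) • (X + Xᵀ)

/-- Loewner order: `X ⪯ Y` iff `Y − X` is positive semidefinite. -/
def loewnerLE {n : ℕ} (X Y : Matrix (Fin n) (Fin n) ℝ) : Prop :=
  (Y - X).PosSemidef

/-!
Conjugating the CV-STEM inequality by the symmetric matrix `M = ν W̄⁻¹` (a congruence, so it
preserves the Loewner order) and dividing by `ν` turns `W̄` into `M`, `D` into `-Ṁ`,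
`sym (A W̄)` into `sym (M A)` and `ν B R⁻¹ Bᵀ` into `M B R⁻¹ Bᵀ M = -sym (M B K)`: the
conjugated inequality is exactly the stability constraint.
-/

lemma Matrix.inv_smul_of_ne_zero {ι K : Type*} [Fintype ι] [DecidableEq ι] [Field K]
    {c : K} (hc : c ≠ 0) {A : Matrix ι ι K} (hA : IsUnit A.det) : (c • A)⁻¹ = c⁻¹ • A⁻¹ :=
  inv_eq_left_inv (by simp [nonsing_inv_mul _ hA, smul_smul, hc])

lemma two_smul_matSym {n : ℕ} (X : Matrix (Fin n) (Fin n) ℝ) :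
    (2 : ℝ) • matSym X = X + Xᵀ := by
  rw [matSym, smul_smul]
  norm_num

lemma loewnerLE.posSemidef_smul_conj {n : ℕ} {X Y P : Matrix (Fin n) (Fin n) ℝ}
    (h : loewnerLE X Y) (hP : Pᵀ = P) {c : ℝ} (hc : 0 ≤ c) :
    (c • (P * (Y - X) * P)).PosSemidef := by
  have := (Matrix.PosSemidef.mul_mul_conjTranspose_same h P).smul hc
  rwa [conjTranspose_eq_transpose_of_trivial, hP] at this

lemma inv_smul_conj_cvstem_eq {n m : ℕ} {ν : ℝ} (hν : ν ≠ 0) (c : ℝ)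
    {Wbar D A M : Matrix (Fin n) (Fin n) ℝ} {B : Matrix (Fin n) (Fin m) ℝ}
    {S : Matrix (Fin m) (Fin m) ℝ} (hMs : Mᵀ = M) (hWbar : Wbarᵀ = Wbar) (hS : Sᵀ = S)
    (hMW : M * Wbar = ν • 1) :
    ν⁻¹ • (M * (c • Wbar - (-D + (2 : ℝ) • matSym (A * Wbar) - (2 * ν) • (B * S * Bᵀ))) * M)
      = c • M - (-(M * (ν⁻¹ • D) * M) + (2 : ℝ) • matSym (M * A + M * B * -(S * Bᵀ * M))) := by
  have hWM : Wbar * M = ν • 1 := by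
    rw [← hMs, ← hWbar, ← transpose_mul, hMW, transpose_smul, transpose_one]
  have hMW_mul (X : Matrix (Fin n) (Fin n) ℝ) : M * (Wbar * X) = ν • X := by
    rw [← Matrix.mul_assoc, hMW, smul_mul, Matrix.one_mul]
  simp only [two_smul_matSym, Matrix.mul_sub, Matrix.sub_mul, Matrix.mul_add, Matrix.add_mul,
    Matrix.mul_smul, Matrix.smul_mul, Matrix.neg_mul, Matrix.mul_neg, transpose_add,
    transpose_mul, transpose_neg, transpose_transpose, hMs, hS, hWbar, Matrix.mul_assoc, hWM,
    hMW_mul, Matrix.mul_one, smul_smul, smul_add, smul_sub, smul_neg]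
  match_scalars <;> field_simp; ring

theorem cvstem_gain_feasible_general {n m : ℕ} (α ν : ℝ) (hν : 0 < ν)
    (Wbar D A : Matrix (Fin n) (Fin n) ℝ) (B : Matrix (Fin n) (Fin m) ℝ)
    (R : Matrix (Fin m) (Fin m) ℝ)
    (hWbar : Wbar.PosDef)
    (hRSymm : R.IsSymm)
    (W : Matrix (Fin n) (Fin n) ℝ) (hW : W = ν⁻¹ • Wbar)
    (M : Matrix (Fin n) (Fin n) ℝ) (hM : M = W⁻¹)
    (Mdot : Matrix (Fin n) (Fin n) ℝ) (hMdot : Mdot = -(M * (ν⁻¹ • D) * M))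
    (K : Matrix (Fin m) (Fin n) ℝ) (hK : K = -(R⁻¹ * Bᵀ * M))
    (hCVSTEM : loewnerLE (-D + (2 : ℝ) • matSym (A * Wbar)
        - (2 * ν) • (B * R⁻¹ * Bᵀ)) ((-(2 * α)) • Wbar)) :
    loewnerLE (Mdot + (2 : ℝ) • matSym (M * A + M * B * K)) ((-(2 * α)) • M) := by
  have hWbarDet : IsUnit Wbar.det := (isUnit_iff_isUnit_det _).mp hWbar.isUnit
  have hMeq : M = ν • Wbar⁻¹ := by
    rw [hM, hW, inv_smul_of_ne_zero (inv_ne_zero hν.ne') hWbarDet, inv_inv]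
  have hMs : Mᵀ = M := by
    rw [hMeq, transpose_smul, (isHermitian_iff_isSymm.mp hWbar.inv.isHermitian).eq]
  have hMW : M * Wbar = ν • 1 := by
    rw [hMeq, smul_mul, nonsing_inv_mul _ hWbarDet]
  have hWbarSymm : Wbarᵀ = Wbar := (isHermitian_iff_isSymm.mp hWbar.isHermitian).eq
  have hRinvSymm : (R⁻¹)ᵀ = R⁻¹ := by rw [transpose_nonsing_inv, hRSymm.eq]
  rw [loewnerLE, hMdot, hK,
    ← inv_smul_conj_cvstem_eq hν.ne' _ hMs hWbarSymm hRinvSymm hMW]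
  exact hCVSTEM.posSemidef_smul_conj hMs (inv_nonneg.mpr hν.le)

/-- **Feasibility of the greedy stability constraint via CV-STEM.**
With `W = ν⁻¹ W̄`, `M = W⁻¹`, `Ṁ = −M(ν⁻¹D)M`, `K = −R⁻¹BᵀM`: if
`−D + 2 sym(A W̄) − 2ν B R⁻¹ Bᵀ ⪯ −2α W̄`, then
`Ṁ + 2 sym(MA + MBK) ⪯ −2αM`, i.e. the CV-STEM gain `K` is feasible. -/
theorem cvstem_gain_feasible {n m : ℕ} (α ν : ℝ) (hα : 0 < α) (hν : 0 < ν)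
    (Wbar D A : Matrix (Fin n) (Fin n) ℝ) (B : Matrix (Fin n) (Fin m) ℝ)
    (R : Matrix (Fin m) (Fin m) ℝ)
    (hWbar : Wbar.PosDef) (hWbarSymm : Wbar.IsSymm)
    (hD : D.IsSymm) (hR : R.PosDef) (hRSymm : R.IsSymm)
    (W : Matrix (Fin n) (Fin n) ℝ) (hW : W = ν⁻¹ • Wbar)
    (M : Matrix (Fin n) (Fin n) ℝ) (hM : M = W⁻¹)
    (Mdot : Matrix (Fin n) (Fin n) ℝ) (hMdot : Mdot = -(M * (ν⁻¹ • D) * M))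
    (K : Matrix (Fin m) (Fin n) ℝ) (hK : K = -(R⁻¹ * Bᵀ * M))
    (hCVSTEM : loewnerLE (-D + (2 : ℝ) • matSym (A * Wbar)
        - (2 * ν) • (B * R⁻¹ * Bᵀ)) ((-(2 * α)) • Wbar)) :
    loewnerLE (Mdot + (2 : ℝ) • matSym (M * A + M * B * K)) ((-(2 * α)) • M) :=
  cvstem_gain_feasible_general α ν hν Wbar D A B R hWbar hRSymm W hW M hM Mdot hMdot K hK hCVSTEM
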